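/- arXiv:1412.1417 — 2 statements merged into one kernel-verified Lean document; each statement's English description precedes it below -/
import Mathlib

section
/- Let k be a field and C a k-linear category. The canonical fully faithful k-linear functor ι : C → Kar(C) into the Karoubi envelope induces an isomorphism of k-vector spaces Tr(ι) : Tr(C) → Tr(Kar(C)). -/
open CategoryTheory CategoryTheory.Limits

universe v u v' u'

variable (k : Type*) [Field k]

/-- The submodule of commutator relations defining the trace of a `k`-linear category. -/
noncomputable def traceRel (C : Type u) [Category.{v} C] [Preadditive C]
    [CategoryTheory.Linear k C] : Submodule k (DirectSum C fun x : C => x ⟶ x) :=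
  letI := Classical.decEq C
  Submodule.span k
    {z | ∃ (x y : C) (f : x ⟶ y) (g : y ⟶ x),
      z = DirectSum.of (fun w : C => w ⟶ w) x (f ≫ g)
        - DirectSum.of (fun w : C => w ⟶ w) y (g ≫ f)}

/-- The trace (zeroth Hochschild–Mitchell homology) of a `k`-linear category:
`(⊕ₓ End x) / span{fg - gf}`. -/
noncomputable abbrev Trace (C : Type u) [Category.{v} C] [Preadditive C]
    [CategoryTheory.Linear k C] : Type _ :=
  (DirectSum C fun x : C => x ⟶ x) ⧸ traceRel k C

/-- The class `[f]` of an endomorphism `f : x ⟶ x` in the trace. -/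
noncomputable def traceMk {C : Type u} [Category.{v} C] [Preadditive C]
    [CategoryTheory.Linear k C] {x : C} (f : x ⟶ x) : Trace k C :=
  letI := Classical.decEq C
  Submodule.Quotient.mk (DirectSum.of (fun w : C => w ⟶ w) x f)

/-- The `k`-linear map `Tr(F) : Tr(C) → Tr(D)` induced by a `k`-linear functor `F : C ⥤ D`,
sending `[f]` to `[F.map f]`. -/
noncomputable def traceMap {C : Type u} [Category.{v} C] [Preadditive C]
    [CategoryTheory.Linear k C] {D : Type u'} [Category.{v'} D] [Preadditive D]
    [CategoryTheory.Linear k D] (F : C ⥤ D) [F.Additive] [F.Linear k] :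
    Trace k C →ₗ[k] Trace k D :=
  letI := Classical.decEq C
  letI := Classical.decEq D
  Submodule.liftQ (traceRel k C)
    (DirectSum.toModule k C (Trace k D)
      (fun x => (traceRel k D).mkQ ∘ₗ
        (DirectSum.lof k D (fun w : D => w ⟶ w) (F.obj x)) ∘ₗ (F.mapLinearMap k)))
    (by
      rw [traceRel, Submodule.span_le]
      rintro z ⟨x, y, f, g, rfl⟩
      simp only [SetLike.mem_coe, LinearMap.mem_ker, map_sub]
      rw [← DirectSum.lof_eq_of k, ← DirectSum.lof_eq_of k,
        DirectSum.toModule_lof, DirectSum.toModule_lof]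
      simp only [LinearMap.comp_apply, Functor.coe_mapLinearMap]
      rw [sub_eq_zero]
      simp only [Submodule.mkQ_apply]
      rw [Submodule.Quotient.eq, traceRel]
      refine Submodule.subset_span ⟨F.obj x, F.obj y, F.map f, F.map g, ?_⟩
      rw [DirectSum.lof_eq_of k, DirectSum.lof_eq_of k, F.map_comp, F.map_comp])

namespace CategoryTheory.Idempotents.Karoubi

variable {C : Type u} [Category.{v} C] [Preadditive C] [CategoryTheory.Linear k C]

instance instSMulHom (P Q : Karoubi C) : SMul k (P ⟶ Q) :=
  ⟨fun r f =>
    ⟨r • f.f, by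
      rw [CategoryTheory.Linear.smul_comp, CategoryTheory.Linear.comp_smul, ← f.comm]
      simp only [← Category.assoc, P.idem, Karoubi.p_comp, Karoubi.comp_p]⟩⟩

@[simp]
theorem smul_hom_f {P Q : Karoubi C} (r : k) (f : P ⟶ Q) : (r • f).f = r • f.f := rfl

instance instModuleHom (P Q : Karoubi C) : Module k (P ⟶ Q) where
  one_smul f := hom_ext _ _ (one_smul k f.f)
  mul_smul r s f := hom_ext _ _ (mul_smul r s f.f)
  smul_zero r := hom_ext _ _ (smul_zero r)
  smul_add r f g := hom_ext _ _ (smul_add r f.f g.f)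
  add_smul r s f := hom_ext _ _ (add_smul r s f.f)
  zero_smul f := hom_ext _ _ (zero_smul k f.f)

instance instLinear : CategoryTheory.Linear k (Karoubi C) where
  homModule P Q := inferInstance
  smul_comp P Q R r f g := hom_ext _ _ (CategoryTheory.Linear.smul_comp _ _ _ r f.f g.f)
  comp_smul P Q R f r g := hom_ext _ _ (CategoryTheory.Linear.comp_smul _ _ _ f.f r g.f)

instance instToKaroubiLinear : (toKaroubi C).Linear k where
  map_smul := by intros; exact hom_ext _ _ rfl

end CategoryTheory.Idempotents.Karoubi


open CategoryTheory.Idempotents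

/-!
The inverse of `Tr(ι)` is `[f] ↦ [f.f]`. The one identity to check is `[f] = [ι(f.f)]` in
`Tr(Kar C)` for `f : P ⟶ P`: the identity of `P` factors as `P ⟶ ι(P.X) ⟶ P` (both maps given
by `P.p`), so `f = i ≫ (p ≫ f)`, and by cyclicity `[f] = [p ≫ f ≫ i] = [ι(f.f)]`.
-/

section Trace

variable {C : Type u} [Category.{v} C] [Preadditive C] [CategoryTheory.Linear k C]

theorem traceMk_comp_comm {x y : C} (f : x ⟶ y) (g : y ⟶ x) :
    traceMk k (f ≫ g) = traceMk k (g ≫ f) := by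
  classical
  rw [traceMk, traceMk, Submodule.Quotient.eq, traceRel]
  exact Submodule.subset_span ⟨x, y, f, g, rfl⟩

theorem Trace.linearMap_ext {M : Type*} [AddCommGroup M] [Module k M]
    {φ ψ : Trace k C →ₗ[k] M} (h : ∀ (x : C) (f : x ⟶ x), φ (traceMk k f) = ψ (traceMk k f)) :
    φ = ψ := by
  classical
  refine Submodule.linearMap_qext _ (DirectSum.linearMap_ext k fun x => LinearMap.ext fun f => ?_)
  simp only [LinearMap.comp_apply, DirectSum.lof_eq_of]
  exact h x f

noncomputable def Trace.lift {M : Type*} [AddCommGroup M] [Module k M]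
    (φ : ∀ x : C, (x ⟶ x) →ₗ[k] M)
    (hφ : ∀ (x y : C) (f : x ⟶ y) (g : y ⟶ x), φ x (f ≫ g) = φ y (g ≫ f)) :
    Trace k C →ₗ[k] M :=
  letI := Classical.decEq C
  Submodule.liftQ (traceRel k C) (DirectSum.toModule k C M φ) <| by
    rw [traceRel, Submodule.span_le]
    rintro z ⟨x, y, f, g, rfl⟩
    simp only [SetLike.mem_coe, LinearMap.mem_ker, map_sub, ← DirectSum.lof_eq_of k,
      DirectSum.toModule_lof, hφ, sub_self]

theorem Trace.lift_traceMk {M : Type*} [AddCommGroup M] [Module k M]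
    (φ : ∀ x : C, (x ⟶ x) →ₗ[k] M)
    (hφ : ∀ (x y : C) (f : x ⟶ y) (g : y ⟶ x), φ x (f ≫ g) = φ y (g ≫ f)) {x : C}
    (f : x ⟶ x) : Trace.lift k φ hφ (traceMk k f) = φ x f := by
  classical
  rw [Trace.lift, traceMk, Submodule.liftQ_apply, ← DirectSum.lof_eq_of k, DirectSum.toModule_lof]

noncomputable def traceMkLinearMap (x : C) : (x ⟶ x) →ₗ[k] Trace k C :=
  letI := Classical.decEq C
  (traceRel k C).mkQ ∘ₗ DirectSum.lof k C (fun w : C => w ⟶ w) x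

theorem traceMkLinearMap_apply {x : C} (f : x ⟶ x) :
    traceMkLinearMap k x f = traceMk k f := by
  rw [traceMkLinearMap, LinearMap.comp_apply, DirectSum.lof_eq_of]
  rfl

theorem traceMap_traceMk {D : Type u'} [Category.{v'} D] [Preadditive D]
    [CategoryTheory.Linear k D] (F : C ⥤ D) [F.Additive] [F.Linear k] {x : C} (f : x ⟶ x) :
    traceMap k F (traceMk k f) = traceMk k (F.map f) := by
  classical
  rw [traceMap, traceMk, Submodule.liftQ_apply, ← DirectSum.lof_eq_of k, DirectSum.toModule_lof]
  rfl

end Trace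

namespace CategoryTheory.Idempotents.Karoubi

variable {C : Type u} [Category.{v} C] [Preadditive C] [CategoryTheory.Linear k C]

noncomputable def homFLinearMap (P Q : Karoubi C) : (P ⟶ Q) →ₗ[k] (P.X ⟶ Q.X) where
  toFun f := f.f
  map_add' _ _ := rfl
  map_smul' _ _ := rfl

noncomputable def traceToKaroubiInv : Trace k (Karoubi C) →ₗ[k] Trace k C :=
  Trace.lift k (fun P => traceMkLinearMap k P.X ∘ₗ homFLinearMap k P P) fun P Q f g => by
    simp only [LinearMap.comp_apply, traceMkLinearMap_apply]
    exact traceMk_comp_comm k f.f g.f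

theorem traceToKaroubiInv_traceMk {P : Karoubi C} (f : P ⟶ P) :
    traceToKaroubiInv k (traceMk k f) = traceMk k f.f := by
  rw [traceToKaroubiInv, Trace.lift_traceMk, LinearMap.comp_apply, traceMkLinearMap_apply]
  rfl

theorem traceMk_eq_traceMk_toKaroubi_map {P : Karoubi C} (f : P ⟶ P) :
    traceMk k f = traceMk k ((toKaroubi C).map f.f) := by
  have hf : f = P.decompId_i ≫ (P.decompId_p ≫ f) := by
    rw [← Category.assoc, ← decompId, Category.id_comp]
  have hswap : (P.decompId_p ≫ f) ≫ P.decompId_i = (toKaroubi C).map f.f := by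
    ext
    simp
  rw [← hswap, ← traceMk_comp_comm, ← hf]

theorem traceToKaroubiInv_comp_traceMap :
    traceToKaroubiInv k ∘ₗ traceMap k (toKaroubi C) = LinearMap.id :=
  Trace.linearMap_ext k fun x f => by
    rw [LinearMap.comp_apply, traceMap_traceMk, traceToKaroubiInv_traceMk]
    rfl

theorem traceMap_comp_traceToKaroubiInv :
    traceMap k (toKaroubi C) ∘ₗ traceToKaroubiInv k = LinearMap.id :=
  Trace.linearMap_ext k fun P f => by
    rw [LinearMap.comp_apply, traceToKaroubiInv_traceMk, traceMap_traceMk,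
      ← traceMk_eq_traceMk_toKaroubi_map]
    rfl

end CategoryTheory.Idempotents.Karoubi

open CategoryTheory.Idempotents.Karoubi

/-- The canonical fully faithful `k`-linear functor `ι : C → Kar(C)` into
the Karoubi envelope induces an isomorphism of `k`-vector spaces `Tr(C) ≅ Tr(Kar(C))`. -/
theorem trace_toKaroubi_bijective
    (C : Type u) [Category.{v} C] [Preadditive C] [CategoryTheory.Linear k C] :
    Function.Bijective (traceMap k (toKaroubi C)) :=
  Function.bijective_iff_has_inverse.mpr ⟨traceToKaroubiInv k,
    LinearMap.congr_fun (traceToKaroubiInv_comp_traceMap k),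
    LinearMap.congr_fun (traceMap_comp_traceToKaroubiInv k)⟩
end

section
/- Let k be a field, let F : C → D be a k-linear functor between k-linear categories, and let α : F ⇒ F be a natural transformation. Then the assignment sending the class [f] of an endomorphism f : x → x in C to the class [α_x ∘ F(f)] = [F(f) ∘ α_x] in Tr(D) is a well-defined k-linear map Tr(α) : Tr(C) → Tr(D). -/
open CategoryTheory CategoryTheory.Limits

universe v u

variable (k : Type*) [Field k]

lemma traceMk_comm {C : Type u} [Category.{v} C] [Preadditive C]
    [CategoryTheory.Linear k C] {x y : C} (f : x ⟶ y) (g : y ⟶ x) :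
    traceMk k (f ≫ g) = traceMk k (g ≫ f) := by
  letI := Classical.decEq C
  unfold traceMk
  rw [Submodule.Quotient.eq]
  exact Submodule.subset_span ⟨x, y, f, g, rfl⟩

/-- `traceMk` as a linear map in `f`. -/
noncomputable def traceMkₗ {C : Type u} [Category.{v} C] [Preadditive C]
    [CategoryTheory.Linear k C] (x : C) : (x ⟶ x) →ₗ[k] Trace k C :=
  letI := Classical.decEq C
  (traceRel k C).mkQ.comp (DirectSum.lof k C (fun w : C => w ⟶ w) x)

lemma traceMkₗ_apply {C : Type u} [Category.{v} C] [Preadditive C]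
    [CategoryTheory.Linear k C] {x : C} (f : x ⟶ x) :
    traceMkₗ k x f = traceMk k f := rfl

/-- For a `k`-linear functor `F : C ⥤ D` and a natural transformation
`α : F ⇒ F`, the assignment `[f] ↦ [α_x ∘ F(f)] = [F(f) ∘ α_x]` is a well-defined `k`-linear
map `Tr(α) : Tr(C) → Tr(D)`. -/
theorem trace_natTrans_welldefined
    (C : Type u) [Category.{v} C] [Preadditive C] [CategoryTheory.Linear k C]
    (D : Type u) [Category.{v} D] [Preadditive D] [CategoryTheory.Linear k D]
    (F : C ⥤ D) [F.Additive] [F.Linear k] (α : F ⟶ F) :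
    ∃ T : Trace k C →ₗ[k] Trace k D,
      ∀ (x : C) (f : x ⟶ x),
        T (traceMk k f) = traceMk k (F.map f ≫ α.app x) ∧
        traceMk k (F.map f ≫ α.app x) = traceMk k (α.app x ≫ F.map f) := by
  letI := Classical.decEq C
  -- the componentwise map
  let φ : ∀ x : C, (x ⟶ x) →ₗ[k] Trace k D := fun x =>
    (traceMkₗ k (F.obj x)).comp
      ((Linear.rightComp k (F.obj x) (α.app x)).comp (F.mapLinearMap k))
  let L : (DirectSum C fun x : C => x ⟶ x) →ₗ[k] Trace k D :=
    DirectSum.toModule k C (Trace k D) φ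
  have hL : ∀ (x : C) (f : x ⟶ x),
      L (DirectSum.of (fun w : C => w ⟶ w) x f) = traceMk k (F.map f ≫ α.app x) := by
    intro x f
    rw [← DirectSum.lof_eq_of k, DirectSum.toModule_lof]
    rfl
  have hker : traceRel k C ≤ LinearMap.ker L := by
    rw [traceRel, Submodule.span_le]
    rintro z ⟨x, y, f, g, rfl⟩
    simp only [SetLike.mem_coe, LinearMap.mem_ker, map_sub, hL]
    rw [sub_eq_zero]
    have h1 : F.map (f ≫ g) ≫ α.app x = F.map f ≫ (α.app y ≫ F.map g) := by
      rw [F.map_comp, Category.assoc, α.naturality]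
    have h2 : F.map (g ≫ f) ≫ α.app y = (F.map g ≫ F.map f) ≫ α.app y := by
      rw [F.map_comp]
    rw [h1, h2, traceMk_comm k (F.map f) (α.app y ≫ F.map g), Category.assoc,
      traceMk_comm k (α.app y) (F.map g ≫ F.map f)]
  refine ⟨(traceRel k C).liftQ L hker, fun x f => ⟨?_, ?_⟩⟩
  · show (traceRel k C).liftQ L hker (Submodule.Quotient.mk _) = _
    rw [Submodule.liftQ_apply]
    exact hL x f
  · rw [traceMk_comm]
end
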